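/- arXiv:2001.10875 — 2 statements merged into one kernel-verified Lean document; each statement's English description precedes it below -/
import Mathlib

section
/- Let I be an SMI instance, let a be a positive integer, and let I_T be the truncated instance of I at rank a. Suppose every stable matching of I_T matches every man. Then the set of stable matchings of I_T is exactly the set of stable matchings M of I such that rank(m, M(m)) ≤ a for every man m matched in M. -/
/-- An instance of the Stable Marriage problem with Incomplete lists (SMI):
men `U` and women `W`, each agent ranking a subset of the other side
in strict order of preference (represented as a duplicate-free list,
most-preferred first). -/
structure SMI (U W : Type) where
  mpref : U → List W
  wpref : W → List U
  mpref_nodup : ∀ m, (mpref m).Nodup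
  wpref_nodup : ∀ w, (wpref w).Nodup

namespace SMI

variable {U W : Type}

/-- The (1-based) rank of woman `w` on man `m`'s preference list. -/
def mrank [DecidableEq W] (I : SMI U W) (m : U) (w : W) : ℕ :=
  (I.mpref m).idxOf w + 1

/-- The (1-based) rank of man `m` on woman `w`'s preference list. -/
def wrank [DecidableEq U] (I : SMI U W) (w : W) (m : U) : ℕ :=
  (I.wpref w).idxOf m + 1

/-- `(m, w)` is an acceptable pair if each appears on the other's list. -/
def Acceptable (I : SMI U W) (m : U) (w : W) : Prop :=
  w ∈ I.mpref m ∧ m ∈ I.wpref w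

/-- A matching: a set of acceptable pairs in which every man and every
woman appears at most once. -/
def IsMatching (I : SMI U W) (M : Set (U × W)) : Prop :=
  (∀ p ∈ M, I.Acceptable p.1 p.2) ∧
  (∀ p ∈ M, ∀ q ∈ M, p.1 = q.1 → p = q) ∧
  (∀ p ∈ M, ∀ q ∈ M, p.2 = q.2 → p = q)

/-- Man `m` is matched in `M`. -/
def MMatched (M : Set (U × W)) (m : U) : Prop := ∃ w, (m, w) ∈ M

/-- Woman `w` is matched in `M`. -/
def WMatched (M : Set (U × W)) (w : W) : Prop := ∃ m, (m, w) ∈ M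

/-- `M` matches every man and every woman. -/
def Perfect (M : Set (U × W)) : Prop :=
  (∀ m : U, MMatched M m) ∧ (∀ w : W, WMatched M w)

/-- `(m, w)` is a blocking pair of `M`. -/
def Blocks [DecidableEq U] [DecidableEq W] (I : SMI U W) (M : Set (U × W))
    (m : U) (w : W) : Prop :=
  I.Acceptable m w ∧
  (¬ MMatched M m ∨ ∃ w', (m, w') ∈ M ∧ I.mrank m w < I.mrank m w') ∧
  (¬ WMatched M w ∨ ∃ m', (m', w) ∈ M ∧ I.wrank w m < I.wrank w m')

/-- A stable matching: a matching admitting no blocking pair. -/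
def IsStable [DecidableEq U] [DecidableEq W] (I : SMI U W) (M : Set (U × W)) : Prop :=
  I.IsMatching M ∧ ∀ m w, ¬ I.Blocks M m w

/-- The man-degree `d_U(M)`: the largest rank of any man in `M`. -/
noncomputable def dU [DecidableEq W] (I : SMI U W) (M : Set (U × W)) : ℕ :=
  sSup {r : ℕ | ∃ p ∈ M, r = I.mrank p.1 p.2}

/-- The woman-degree `d_W(M)`: the largest rank of any woman in `M`. -/
noncomputable def dW [DecidableEq U] (I : SMI U W) (M : Set (U × W)) : ℕ :=
  sSup {r : ℕ | ∃ p ∈ M, r = I.wrank p.2 p.1}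

/-- The regret-equality score `r(M) = |d_U(M) - d_W(M)|`. -/
noncomputable def rScore [DecidableEq U] [DecidableEq W] (I : SMI U W) (M : Set (U × W)) : ℕ :=
  ((I.dU M : ℤ) - (I.dW M : ℤ)).natAbs

/-- `M0` is a man-optimal and woman-pessimal stable matching of `I`. -/
def ManOptWomanPess [DecidableEq U] [DecidableEq W] (I : SMI U W)
    (M0 : Set (U × W)) : Prop :=
  I.IsStable M0 ∧ ∀ M, I.IsStable M →
    (∀ m w0 w, (m, w0) ∈ M0 → (m, w) ∈ M → I.mrank m w0 ≤ I.mrank m w) ∧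
    (∀ w m0 m, (m0, w) ∈ M0 → (m, w) ∈ M → I.wrank w m ≤ I.wrank w m0)

/-- `Mz` is a woman-optimal and man-pessimal stable matching of `I`. -/
def WomanOptManPess [DecidableEq U] [DecidableEq W] (I : SMI U W)
    (Mz : Set (U × W)) : Prop :=
  I.IsStable Mz ∧ ∀ M, I.IsStable M →
    (∀ w mz m, (mz, w) ∈ Mz → (m, w) ∈ M → I.wrank w mz ≤ I.wrank w m) ∧
    (∀ m wz w, (m, wz) ∈ Mz → (m, w) ∈ M → I.mrank m w ≤ I.mrank m wz)

/-- The truncated instance `I_T` of `I` at rank `a`: every pair `(m, w)` with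
`rank(m, w) > a` is deleted, i.e. each man's list is cut after his `a`-th
choice, and he is removed from the lists of the women thereby deleted. -/
def truncate [DecidableEq W] (I : SMI U W) (a : ℕ) : SMI U W where
  mpref m := (I.mpref m).take a
  wpref w := (I.wpref w).filter (fun m => decide (w ∈ (I.mpref m).take a))
  mpref_nodup m := ((I.mpref m).take_sublist a).nodup (I.mpref_nodup m)
  wpref_nodup w := (I.wpref_nodup w).filter _

end SMI

/-!
Truncation keeps exactly the acceptable pairs of man-rank at most `a` and preserves the relative
order of the surviving entries on every list, so a matching of `I` with all ranks at most `a` is a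
matching of `I_T`, and a pair blocks it in `I_T` only if it blocks it in `I`. Conversely, a pair
blocking a stable matching of `I_T` in `I` cannot involve an unmatched man, and a matched man's
partner has rank at most `a`, so any woman he prefers survives the truncation and the pair already
blocks in `I_T`.
-/

namespace List

variable {α : Type*} [DecidableEq α]

theorem idxOf_filter_lt_idxOf_filter_iff {p : α → Bool} {x y : α} (hx : p x) (hy : p y)
    (l : List α) : (l.filter p).idxOf x < (l.filter p).idxOf y ↔ l.idxOf x < l.idxOf y := by
  induction l with
  | nil => simp
  | cons z l ih =>
    by_cases hz : p z
    · simp only [filter_cons, hz, if_true, idxOf_cons]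
      grind
    · have hzx : z ≠ x := by rintro rfl; exact hz hx
      have hzy : z ≠ y := by rintro rfl; exact hz hy
      simp [hz, idxOf_cons_ne _ hzx, idxOf_cons_ne _ hzy, ih]

theorem idxOf_take_of_idxOf_lt {l : List α} {x : α} {n : ℕ} (h : l.idxOf x < n) :
    (l.take n).idxOf x = l.idxOf x := by
  by_cases hx : x ∈ l
  · exact (l.take_prefix n).idxOf_eq_of_mem ((mem_take_iff_idxOf_lt hx).2 h)
  · rw [take_of_length_le (by grind [idxOf_eq_length])]

end List

namespace SMI

variable {U W : Type} [DecidableEq W] {I : SMI U W} {a : ℕ} {M : Set (U × W)} {m m' : U} {w : W}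

theorem mrank_le_iff_mem_take (hw : w ∈ I.mpref m) :
    I.mrank m w ≤ a ↔ w ∈ (I.mpref m).take a := by
  rw [List.mem_take_iff_idxOf_lt hw, mrank, Nat.add_one_le_iff]

theorem truncate_acceptable_iff :
    (I.truncate a).Acceptable m w ↔ I.Acceptable m w ∧ I.mrank m w ≤ a := by
  simp only [Acceptable, truncate, List.mem_filter, decide_eq_true_eq]
  constructor
  · rintro ⟨hw, hm, -⟩
    have hw' := List.mem_of_mem_take hw
    exact ⟨⟨hw', hm⟩, (mrank_le_iff_mem_take hw').2 hw⟩
  · rintro ⟨⟨hw, hm⟩, hrank⟩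
    have hw' := (mrank_le_iff_mem_take hw).1 hrank
    exact ⟨hw', hm, hw'⟩

theorem truncate_mrank (h : I.mrank m w ≤ a) : (I.truncate a).mrank m w = I.mrank m w :=
  congrArg (· + 1) (List.idxOf_take_of_idxOf_lt h)

theorem isMatching_truncate_iff :
    (I.truncate a).IsMatching M ↔ I.IsMatching M ∧ ∀ m w, (m, w) ∈ M → I.mrank m w ≤ a := by
  constructor
  · rintro ⟨hacc, hman, hwoman⟩
    exact ⟨⟨fun p hp ↦ (truncate_acceptable_iff.1 (hacc p hp)).1, hman, hwoman⟩,
      fun m w h ↦ (truncate_acceptable_iff.1 (hacc _ h)).2⟩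
  · rintro ⟨⟨hacc, hman, hwoman⟩, hrank⟩
    exact ⟨fun p hp ↦ truncate_acceptable_iff.2 ⟨hacc p hp, hrank _ _ hp⟩, hman, hwoman⟩

variable [DecidableEq U]

theorem truncate_wrank_lt_iff (hm : (I.truncate a).Acceptable m w)
    (hm' : (I.truncate a).Acceptable m' w) :
    (I.truncate a).wrank w m < (I.truncate a).wrank w m' ↔ I.wrank w m < I.wrank w m' := by
  simpa [wrank, truncate] using
    List.idxOf_filter_lt_idxOf_filter_iff (p := fun m ↦ decide (w ∈ (I.mpref m).take a))
      (decide_eq_true hm.1) (decide_eq_true hm'.1) (I.wpref w)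

theorem Blocks.of_truncate (hM : (I.truncate a).IsMatching M) (h : (I.truncate a).Blocks M m w) :
    I.Blocks M m w := by
  obtain ⟨hacc, hman, hwoman⟩ := h
  have hrank := (truncate_acceptable_iff.1 hacc).2
  refine ⟨(truncate_acceptable_iff.1 hacc).1, hman.imp_right ?_, hwoman.imp_right ?_⟩
  · rintro ⟨w', hw', hlt⟩
    rw [truncate_mrank hrank, truncate_mrank (truncate_acceptable_iff.1 (hM.1 _ hw')).2] at hlt
    exact ⟨w', hw', hlt⟩
  · rintro ⟨m', hm', hlt⟩
    exact ⟨m', hm', (truncate_wrank_lt_iff hacc (hM.1 _ hm')).1 hlt⟩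

theorem Blocks.truncate (hM : (I.truncate a).IsMatching M) (hm : MMatched M m)
    (h : I.Blocks M m w) : (I.truncate a).Blocks M m w := by
  obtain ⟨hacc, hman, hwoman⟩ := h
  obtain ⟨w', hw', hlt⟩ := hman.resolve_left (not_not.2 hm)
  have hw'rank := (truncate_acceptable_iff.1 (hM.1 _ hw')).2
  have haccT : (I.truncate a).Acceptable m w :=
    truncate_acceptable_iff.2 ⟨hacc, hlt.le.trans hw'rank⟩
  refine ⟨haccT, Or.inr ⟨w', hw', ?_⟩, hwoman.imp_right ?_⟩
  · rwa [truncate_mrank (truncate_acceptable_iff.1 haccT).2, truncate_mrank hw'rank]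
  · rintro ⟨m', hm', hlt⟩
    exact ⟨m', hm', (truncate_wrank_lt_iff haccT (hM.1 _ hm')).2 hlt⟩

end SMI

theorem stmt_6_general {U W : Type} [DecidableEq U] [DecidableEq W]
    (I : SMI U W) (a : ℕ)
    (hT : ∀ M : Set (U × W), (I.truncate a).IsStable M → ∀ m : U, SMI.MMatched M m) :
    ∀ M : Set (U × W),
      (I.truncate a).IsStable M ↔
        (I.IsStable M ∧ ∀ (m : U) (w : W), (m, w) ∈ M → I.mrank m w ≤ a) := by
  intro M
  constructor
  · intro hM
    obtain ⟨hMI, hrank⟩ := SMI.isMatching_truncate_iff.1 hM.1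
    exact ⟨⟨hMI, fun m w hb ↦ hM.2 m w (hb.truncate hM.1 (hT M hM m))⟩, hrank⟩
  · rintro ⟨hM, hrank⟩
    have hMT := SMI.isMatching_truncate_iff.2 ⟨hM.1, hrank⟩
    exact ⟨hMT, fun m w hb ↦ hM.2 m w (hb.of_truncate hMT)⟩

/-- If every stable matching of the truncated instance `I_T` matches every
man, then the stable matchings of `I_T` are exactly the stable matchings of
`I` in which every matched man has rank at most `a`. -/
theorem stmt_6 {U W : Type} [Fintype U] [Fintype W] [DecidableEq U] [DecidableEq W]
    (I : SMI U W) (a : ℕ) (ha : 0 < a)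
    (hT : ∀ M : Set (U × W), (I.truncate a).IsStable M → ∀ m : U, SMI.MMatched M m) :
    ∀ M : Set (U × W),
      (I.truncate a).IsStable M ↔
        (I.IsStable M ∧ ∀ (m : U) (w : W), (m, w) ∈ M → I.mrank m w ≤ a) :=
  stmt_6_general I a hT
end

section
/- Let M and N be stable matchings of an SMI instance I, each matching every man and every woman, such that rank(m, M(m)) ≤ rank(m, N(m)) for every man m. If d_U(M) ≥ d_W(M), then r(N) ≥ r(M); that is, once the men's degree of a stable matching is at least the women's degree, making every man weakly worse off cannot decrease the regret-equality score. -/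
theorem csSup_le_csSup_of_forall_exists_le {α : Type*} [ConditionallyCompleteLinearOrderBot α]
    {s t : Set α} (ht : BddAbove t) (h : ∀ x ∈ s, ∃ y ∈ t, x ≤ y) : sSup s ≤ sSup t :=
  csSup_le' fun x hx =>
    let ⟨_, hy, hxy⟩ := h x hx
    hxy.trans (le_csSup ht hy)

namespace SMI

variable {U W : Type} (I : SMI U W)

theorem eq_of_mrank_eq [DecidableEq W] {m : U} {w w' : W} (hw : w ∈ I.mpref m)
    (h : I.mrank m w = I.mrank m w') : w = w' :=
  (List.idxOf_inj hw).mp (Nat.succ_injective h)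

theorem wrank_le_of_forall_mrank_le [DecidableEq U] [DecidableEq W] {M N : Set (U × W)}
    (hMacc : ∀ p ∈ M, I.Acceptable p.1 p.2) (hN : I.IsStable N) (hNm : ∀ m, MMatched N m)
    (hle : ∀ (m : U) (w w' : W), (m, w) ∈ M → (m, w') ∈ N → I.mrank m w ≤ I.mrank m w')
    {w : W} {m m' : U} (hmM : (m, w) ∈ M) (hm'N : (m', w) ∈ N) :
    I.wrank w m' ≤ I.wrank w m := by
  by_contra! hlt
  obtain ⟨w', hw'N⟩ := hNm m
  have hacc : I.Acceptable m w := hMacc _ hmM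
  have hne : w ≠ w' := by
    rintro rfl
    obtain rfl : m = m' := congrArg Prod.fst (hN.1.2.2 _ hw'N _ hm'N rfl)
    exact hlt.false
  have hmlt : I.mrank m w < I.mrank m w' :=
    (hle m w w' hmM hw'N).lt_of_ne fun h => hne (I.eq_of_mrank_eq hacc.1 h)
  exact hN.2 m w ⟨hacc, Or.inr ⟨w', hw'N, hmlt⟩, Or.inr ⟨m', hm'N, hlt⟩⟩

theorem bddAbove_mrank [Finite U] [Finite W] [DecidableEq W] (M : Set (U × W)) :
    BddAbove {r : ℕ | ∃ p ∈ M, r = I.mrank p.1 p.2} :=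
  (Set.finite_range fun p : U × W => I.mrank p.1 p.2).bddAbove.mono <| by
    rintro _ ⟨p, -, rfl⟩
    exact ⟨p, rfl⟩

theorem bddAbove_wrank [Finite U] [Finite W] [DecidableEq U] (M : Set (U × W)) :
    BddAbove {r : ℕ | ∃ p ∈ M, r = I.wrank p.2 p.1} :=
  (Set.finite_range fun p : U × W => I.wrank p.2 p.1).bddAbove.mono <| by
    rintro _ ⟨p, -, rfl⟩
    exact ⟨p, rfl⟩

theorem dU_le_dU [Finite U] [Finite W] [DecidableEq W] {M N : Set (U × W)}
    (h : ∀ p ∈ M, ∃ q ∈ N, I.mrank p.1 p.2 ≤ I.mrank q.1 q.2) : I.dU M ≤ I.dU N := by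
  refine csSup_le_csSup_of_forall_exists_le (I.bddAbove_mrank N) ?_
  rintro _ ⟨p, hp, rfl⟩
  obtain ⟨q, hq, hpq⟩ := h p hp
  exact ⟨_, ⟨q, hq, rfl⟩, hpq⟩

theorem dW_le_dW [Finite U] [Finite W] [DecidableEq U] {M N : Set (U × W)}
    (h : ∀ p ∈ M, ∃ q ∈ N, I.wrank p.2 p.1 ≤ I.wrank q.2 q.1) : I.dW M ≤ I.dW N := by
  refine csSup_le_csSup_of_forall_exists_le (I.bddAbove_wrank N) ?_
  rintro _ ⟨p, hp, rfl⟩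
  obtain ⟨q, hq, hpq⟩ := h p hp
  exact ⟨_, ⟨q, hq, rfl⟩, hpq⟩

end SMI

/-- If every man is weakly better off in `M` than in `N` (both stable and
perfect) and `d_U(M) ≥ d_W(M)`, then `r(N) ≥ r(M)`. -/
theorem stmt_11 {U W : Type} [Fintype U] [Fintype W] [DecidableEq U] [DecidableEq W]
    (I : SMI U W)
    (M N : Set (U × W)) (hM : I.IsStable M) (hN : I.IsStable N)
    (hMp : SMI.Perfect M) (hNp : SMI.Perfect N)
    (hle : ∀ (m : U) (w w' : W), (m, w) ∈ M → (m, w') ∈ N → I.mrank m w ≤ I.mrank m w')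
    (h : I.dW M ≤ I.dU M) :
    I.rScore M ≤ I.rScore N := by
  have hdU : I.dU M ≤ I.dU N := I.dU_le_dU fun ⟨m, w⟩ hmw =>
    let ⟨w', hw'⟩ := hNp.1 m
    ⟨(m, w'), hw', hle m w w' hmw hw'⟩
  have hdW : I.dW N ≤ I.dW M := I.dW_le_dW fun ⟨m', w⟩ hm'w =>
    let ⟨m, hm⟩ := hMp.2 w
    ⟨(m, w), hm, I.wrank_le_of_forall_mrank_le hM.1.1 hN hNp.1 hle hm hm'w⟩
  unfold SMI.rScore
  omega
end
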